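/- arXiv:2210.14623 — 4 statements merged into one kernel-verified Lean document; each statement's English description precedes it below -/
import Mathlib

section
/- Let d > 2 be an integer such that 2 is a square in ℤ/dℤ. Then there exist coprime integers x, y with x > 0, y > 0, 3y < 4x and 2x² - y² = d. (This is the arithmetic core of the statement that a K3 surface with Picard lattice [4 0 -2] generated by H and E admits a primitive ample class D = xH - yE with D² = 2d.) -/
/-!
Let `z² ≡ 2 (mod d)`. The elements `y + x√2` of `ℤ[√2]` with `y ≡ z x (mod d)` form the ideal
`(d, z + √2)`, and we find one of norm `-d`, i.e. with `2x² - y² = d`, by descent: for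
`2 ≤ z ≤ d` we have `z² - 2 = d k` with `0 < k < d`, and a solution for `k` and the root `-z`,
multiplied by `z + √2` and divided by `k`, is a solution for `d`. Such an element generates
`(d, z + √2)`, which contains `z + √2`, so no integer `> 1` divides both `x` and `y`. Finally the
automorphism `(x, y) ↦ (3x - 2y, 4x - 3y)` of `2x² - y²` decreases `x` while `y > x > 0`.
-/

lemma exists_dvd_sq_sub_of_isSquare_intCast {n : ℕ} {a : ℤ} (h : IsSquare (a : ZMod n)) :
    ∃ z : ℤ, (n : ℤ) ∣ z ^ 2 - a := by
  obtain ⟨r, hr⟩ := h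
  refine ⟨r.cast, (ZMod.intCast_eq_intCast_iff_dvd_sub _ _ _).mp ?_⟩
  rw [hr, Int.cast_pow, ZMod.intCast_zmod_cast, sq]

lemma exists_two_mul_sq_sub_sq_eq_of_sq_sub_two_eq_mul {n k z a b : ℤ} (hk : k ≠ 0)
    (hz : z ^ 2 - 2 = n * k) (hdvd : k ∣ b + z * a) (hab : 2 * a ^ 2 - b ^ 2 = k) :
    ∃ x y : ℤ, n ∣ y - z * x ∧ 2 * x ^ 2 - y ^ 2 = n := by
  -- `k (y + x√2) = (b + a√2)(z + √2) = (z b + 2 a) + (b + z a)√2`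
  obtain ⟨x, hx⟩ := hdvd
  have hy : k * (z * x - n * a) = z * b + 2 * a := by linear_combination (-z) * hx + a * hz
  refine ⟨x, z * x - n * a, ⟨-a, by ring⟩, mul_left_cancel₀ (pow_ne_zero 2 hk) ?_⟩
  rw [show k ^ 2 * (2 * x ^ 2 - (z * x - n * a) ^ 2) = 2 * (k * x) ^ 2 - (k * (z * x - n * a)) ^ 2
    by ring, ← hx, hy]
  linear_combination (2 * a ^ 2 - b ^ 2) * hz + n * k * hab

lemma isCoprime_of_two_mul_sq_sub_sq_eq {n z x y : ℤ} (hn : n ≠ 0) (hz : n ∣ z ^ 2 - 2)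
    (hyx : n ∣ y - z * x) (h : 2 * x ^ 2 - y ^ 2 = n) : IsCoprime x y := by
  obtain ⟨s, hs⟩ := hyx
  obtain ⟨t, ht⟩ : n ∣ z * y - 2 * x := by
    have : z * y - 2 * x = z * (y - z * x) + (z ^ 2 - 2) * x := by ring
    rw [this]
    exact dvd_add (Dvd.intro s hs.symm |>.mul_left z) (hz.mul_right x)
  refine ⟨-t, -s, mul_left_cancel₀ hn ?_⟩
  linear_combination x * ht + y * hs + h

theorem exists_two_mul_sq_sub_sq_eq_of_dvd_sq_sub_two (n : ℕ) (z : ℤ)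
    (h : (n : ℤ) ∣ z ^ 2 - 2) : ∃ x y : ℤ, (n : ℤ) ∣ y - z * x ∧ 2 * x ^ 2 - y ^ 2 = n := by
  induction n using Nat.strong_induction_on generalizing z with
  | _ n ih =>
  rcases lt_or_ge n 2 with hn | hn
  · interval_cases n
    · exact ⟨0, 0, by simp, by simp⟩
    · exact ⟨1, 1, one_dvd _, by norm_num⟩
  obtain ⟨z₀, hzz₀, hz₀_pos, hz₀n⟩ : ∃ z₀ : ℤ, (n : ℤ) ∣ z - z₀ ∧ 1 ≤ z₀ ∧ z₀ ≤ n :=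
    ⟨(z - 1) % n + 1, ⟨(z - 1) / n, by rw [Int.emod_def]; ring⟩,
      by linarith [Int.emod_nonneg (z - 1) (by omega : (n : ℤ) ≠ 0)],
      by linarith [Int.emod_lt_of_pos (z - 1) (by omega : (0 : ℤ) < n)]⟩
  obtain ⟨k, hk⟩ : (n : ℤ) ∣ z₀ ^ 2 - 2 := by
    have : z₀ ^ 2 - 2 = (z ^ 2 - 2) - (z - z₀) * (z + z₀) := by ring
    rw [this]
    exact dvd_sub h (hzz₀.mul_right _)
  have hz₀ : 2 ≤ z₀ := by
    by_contra! h₁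
    obtain rfl : z₀ = 1 := by omega
    have h₂ : (n : ℤ) ∣ 1 := ⟨-k, by linear_combination -hk⟩
    have := Int.le_of_dvd one_pos h₂
    omega
  have hk_pos : 0 < k := by nlinarith
  have hk_lt : k < n := by nlinarith
  lift k to ℕ using hk_pos.le
  obtain ⟨a, b, hdvd, hab⟩ :=
    ih k (by exact_mod_cast hk_lt) (-z₀) ⟨n, by linear_combination hk⟩
  obtain ⟨x, y, hxy, hxy'⟩ := exists_two_mul_sq_sub_sq_eq_of_sq_sub_two_eq_mul
    (by exact_mod_cast hk_pos.ne') hk (by simpa [sub_eq_add_neg] using hdvd) hab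
  refine ⟨x, y, ?_, hxy'⟩
  have : y - z * x = (y - z₀ * x) - (z - z₀) * x := by ring
  rw [this]
  exact dvd_sub hxy (hzz₀.mul_right x)

theorem exists_le_of_two_mul_sq_sub_sq_eq {d x y : ℤ} (hd : 0 < d) (hxy : IsCoprime x y)
    (h : 2 * x ^ 2 - y ^ 2 = d) :
    ∃ x y : ℤ, IsCoprime x y ∧ 0 ≤ y ∧ y ≤ x ∧ 2 * x ^ 2 - y ^ 2 = d := by
  induction hn : x.natAbs using Nat.strong_induction_on generalizing x y with
  | _ n ih =>
  rcases le_or_gt |y| |x| with hle | hlt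
  · exact ⟨|x|, |y|, hxy.abs_abs, abs_nonneg y, hle, by rwa [sq_abs, sq_abs]⟩
  obtain ⟨u, v, huv⟩ := hxy.abs_abs
  have habs : 2 * |x| ^ 2 - |y| ^ 2 = d := by rwa [sq_abs, sq_abs]
  have h₁ : 0 < 3 * |x| - 2 * |y| := by nlinarith [abs_nonneg x, abs_nonneg y]
  refine ih (3 * |x| - 2 * |y|).natAbs ?_ (x := 3 * |x| - 2 * |y|) (y := 4 * |x| - 3 * |y|)
    ⟨3 * u + 4 * v, -2 * u - 3 * v, by linear_combination huv⟩ (by linear_combination habs) rfl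
  rw [← hn, ← Int.ofNat_lt, Int.natCast_natAbs, Int.natCast_natAbs, abs_of_pos h₁]
  linarith

/-- Let `d > 2` be an integer such that `2` is a square in `ℤ/dℤ`.
Then there exist coprime integers `x, y` with `x > 0`, `y > 0`, `3y < 4x`
and `2x² - y² = d`. -/
theorem exists_primitive_ample_class_of_degree_two_d
    (d : ℕ) (hd : 2 < d) (h2 : IsSquare (2 : ZMod d)) :
    ∃ x y : ℤ, IsCoprime x y ∧ 0 < x ∧ 0 < y ∧ 3 * y < 4 * x ∧
      2 * x ^ 2 - y ^ 2 = (d : ℤ) := by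
  obtain ⟨z, hz⟩ := exists_dvd_sq_sub_of_isSquare_intCast (a := 2) (by exact_mod_cast h2)
  obtain ⟨x, y, hyx, hxy⟩ := exists_two_mul_sq_sub_sq_eq_of_dvd_sq_sub_two d z hz
  have hco := isCoprime_of_two_mul_sq_sub_sq_eq (by omega) hz hyx hxy
  obtain ⟨x, y, hco, hy_nonneg, hyx, hxy⟩ := exists_le_of_two_mul_sq_sub_sq_eq (by omega) hco hxy
  have hx : 0 < x := by nlinarith
  have hy_ne : y ≠ 0 := by
    rintro rfl
    obtain rfl | rfl := Int.isUnit_iff.mp (isCoprime_zero_right.mp hco) <;> omega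
  exact ⟨x, y, hco, hx, by omega, by omega, hxy⟩
end

section
/- For all complex numbers x, y, z, w: if xw - yz = 0, xy² + x²z - z³ - xyw + yw² - w³ = 0 and xz² + z³ + xyw + w³ = 0, then -xy³ + xz³ + z⁴ - x³w - x²zw + x²w² - y²w² + zw³ = 0. (The quartic surface X₄ contains the degree-5, genus-2 curve C.) -/
/-- The quartic surface `X₄` contains the degree-5, genus-2 curve `C`. -/
theorem X4_contains_curve_C (x y z w : ℂ)
    (h1 : x * w - y * z = 0)
    (h2 : x * y ^ 2 + x ^ 2 * z - z ^ 3 - x * y * w + y * w ^ 2 - w ^ 3 = 0)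
    (h3 : x * z ^ 2 + z ^ 3 + x * y * w + w ^ 3 = 0) :
    -x * y ^ 3 + x * z ^ 3 + z ^ 4 - x ^ 3 * w - x ^ 2 * z * w + x ^ 2 * w ^ 2
      - y ^ 2 * w ^ 2 + z * w ^ 3 = 0 := by
  -- The quartic even lies in the ideal generated by the three equations of `C`.
  linear_combination (-x ^ 2 - x * y - x * z + x * w - w ^ 2) * h1 + (-y - z) * h2 + (x - y) * h3
end

section
/- For all complex numbers s, t, u with u² = s⁵t - 5s⁴t² - 8s³t³ + 8s²t⁴ + 5st⁵ - 4t⁶, the point (x₀, x₁, x₂, x₃, x₄) = (s³, s²t, st², t³, u) satisfies both defining equations of the surface X₆, namely x₀x₁ - 5x₁² - 9x₁x₂ + 8x₂² + x₀x₃ + 5x₂x₃ - 4x₃² - x₄² = 0 and x₀²x₁ - 1204x₀x₂x₃ - 1291x₀x₃² + 1721x₁x₃² + 853x₂x₃² - 788x₃³ + x₁x₂x₄ - x₀x₃x₄ - x₀x₄² - 5x₁x₄² - 33x₂x₄² - 197x₃x₄² = 0. (The image of the genus-2 hyperelliptic curve under the map (x : y : z) ↦ (x³ : x²y : xy² : y³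 : z) lies on X₆.) -/
/-- The image of the genus-2 hyperelliptic curve under
`(x : y : z) ↦ (x³ : x²y : xy² : y³ : z)` lies on the K3 surface `X₆`. -/
theorem hyperelliptic_image_lies_on_X6 (s t u : ℂ)
    (h : u ^ 2 = s ^ 5 * t - 5 * s ^ 4 * t ^ 2 - 8 * s ^ 3 * t ^ 3
      + 8 * s ^ 2 * t ^ 4 + 5 * s * t ^ 5 - 4 * t ^ 6) :
    (s ^ 3) * (s ^ 2 * t) - 5 * (s ^ 2 * t) ^ 2 - 9 * (s ^ 2 * t) * (s * t ^ 2)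
        + 8 * (s * t ^ 2) ^ 2 + (s ^ 3) * (t ^ 3) + 5 * (s * t ^ 2) * (t ^ 3)
        - 4 * (t ^ 3) ^ 2 - u ^ 2 = 0 ∧
    (s ^ 3) ^ 2 * (s ^ 2 * t) - 1204 * (s ^ 3) * (s * t ^ 2) * (t ^ 3)
        - 1291 * (s ^ 3) * (t ^ 3) ^ 2 + 1721 * (s ^ 2 * t) * (t ^ 3) ^ 2
        + 853 * (s * t ^ 2) * (t ^ 3) ^ 2 - 788 * (t ^ 3) ^ 3
        + (s ^ 2 * t) * (s * t ^ 2) * u - (s ^ 3) * (t ^ 3) * u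
        - (s ^ 3) * u ^ 2 - 5 * (s ^ 2 * t) * u ^ 2 - 33 * (s * t ^ 2) * u ^ 2
        - 197 * (t ^ 3) * u ^ 2 = 0 := by
  -- The terms linear in `u` cancel since `x₁x₂ = x₀x₃` on the twisted cubic, so after
  -- substituting `u²` both equations are polynomial identities in `s, t`.
  constructor <;> · rw [h]; ring
end

section
/- For all complex numbers x₀, x₁, x₂, x₃, x₄: if x₂² - x₁x₃ = 0, x₁x₂ - x₀x₃ = 0, x₁² - x₀x₂ = 0 and x₀x₁ - 5x₁² - 8x₁x₂ + 8x₂² + 5x₂x₃ - 4x₃² - x₄² = 0, then both x₀x₁ - 5x₁² - 9x₁x₂ + 8x₂² + x₀x₃ + 5x₂x₃ - 4x₃² - x₄² = 0 and x₀²x₁ - 1204x₀x₂x₃ - 1291x₀x₃² + 1721x₁x₃² + 853x₂x₃² - 788x₃³ + x₁x₂x₄ - x₀x₃x₄ - x₀x₄² - 5x₁x₄² - 33x₂x₄² - 197x₃x₄² = 0. (The K3 surface X₆ of degree 6 contains the degree-6, genus-2 curve C₆.) -/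
/-!
Both equations of `X₆` lie in the ideal of `C₆`, which is generated by the three quadrics
`h1, h2, h3` of the twisted cubic in `x₀, …, x₃` together with the quadric `h4`. The quadric of
`X₆` is `h4 - h2`. For the cubic, the multiple `(x₀ + 5x₁ + 33x₂ + 197x₃) · h4` absorbs the terms in
`x₄²` and `x₄ · h2` the terms linear in `x₄`; what is left is a cubic form in `x₀, …, x₃` in the
ideal of the twisted cubic.
-/

section

variable {R : Type*} [CommRing R] {x₀ x₁ x₂ x₃ x₄ : R}

theorem X6_quadric_eq_zero_of_C6
    (h2 : x₁ * x₂ - x₀ * x₃ = 0)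
    (h4 : x₀ * x₁ - 5 * x₁ ^ 2 - 8 * x₁ * x₂ + 8 * x₂ ^ 2 + 5 * x₂ * x₃
      - 4 * x₃ ^ 2 - x₄ ^ 2 = 0) :
    x₀ * x₁ - 5 * x₁ ^ 2 - 9 * x₁ * x₂ + 8 * x₂ ^ 2 + x₀ * x₃ + 5 * x₂ * x₃
      - 4 * x₃ ^ 2 - x₄ ^ 2 = 0 := by
  linear_combination h4 - h2

theorem X6_cubic_eq_zero_of_C6
    (h1 : x₂ ^ 2 - x₁ * x₃ = 0)
    (h2 : x₁ * x₂ - x₀ * x₃ = 0)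
    (h3 : x₁ ^ 2 - x₀ * x₂ = 0)
    (h4 : x₀ * x₁ - 5 * x₁ ^ 2 - 8 * x₁ * x₂ + 8 * x₂ ^ 2 + 5 * x₂ * x₃
      - 4 * x₃ ^ 2 - x₄ ^ 2 = 0) :
    x₀ ^ 2 * x₁ - 1204 * x₀ * x₂ * x₃ - 1291 * x₀ * x₃ ^ 2 + 1721 * x₁ * x₃ ^ 2
      + 853 * x₂ * x₃ ^ 2 - 788 * x₃ ^ 3 + x₁ * x₂ * x₄ - x₀ * x₃ * x₄
      - x₀ * x₄ ^ 2 - 5 * x₁ * x₄ ^ 2 - 33 * x₂ * x₄ ^ 2 - 197 * x₃ * x₄ ^ 2 = 0 := by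
  linear_combination (x₀ + 5 * x₁ + 33 * x₂ + 197 * x₃) * h4 + x₄ * h2
    + (-8 * x₀ - 985 * x₁ - 264 * x₂ - 1741 * x₃) * h1
    + (205 * x₁ + 1209 * x₂ + 1287 * x₃) * h2 + 25 * x₁ * h3

end

/-- The K3 surface `X₆` of degree 6 contains the degree-6, genus-2 curve `C₆`. -/
theorem X6_contains_curve_C6 (x₀ x₁ x₂ x₃ x₄ : ℂ)
    (h1 : x₂ ^ 2 - x₁ * x₃ = 0)
    (h2 : x₁ * x₂ - x₀ * x₃ = 0)
    (h3 : x₁ ^ 2 - x₀ * x₂ = 0)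
    (h4 : x₀ * x₁ - 5 * x₁ ^ 2 - 8 * x₁ * x₂ + 8 * x₂ ^ 2 + 5 * x₂ * x₃
      - 4 * x₃ ^ 2 - x₄ ^ 2 = 0) :
    (x₀ * x₁ - 5 * x₁ ^ 2 - 9 * x₁ * x₂ + 8 * x₂ ^ 2 + x₀ * x₃ + 5 * x₂ * x₃
        - 4 * x₃ ^ 2 - x₄ ^ 2 = 0) ∧
    (x₀ ^ 2 * x₁ - 1204 * x₀ * x₂ * x₃ - 1291 * x₀ * x₃ ^ 2 + 1721 * x₁ * x₃ ^ 2
        + 853 * x₂ * x₃ ^ 2 - 788 * x₃ ^ 3 + x₁ * x₂ * x₄ - x₀ * x₃ * x₄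
        - x₀ * x₄ ^ 2 - 5 * x₁ * x₄ ^ 2 - 33 * x₂ * x₄ ^ 2
        - 197 * x₃ * x₄ ^ 2 = 0) :=
  ⟨X6_quadric_eq_zero_of_C6 h2 h4, X6_cubic_eq_zero_of_C6 h1 h2 h3 h4⟩
end
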